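/- Let f(n, k) denote the number of words in [k]^n avoiding the pattern 111. Then for every integer k ≥ 1, the identity (∑_{n ≥ 0} f(n, k)·x^n) · (1 - (k-1)·x - (k-1)·x²) = 1 + x + x² holds as an identity of formal power series over ℚ. -/

import Mathlib

open PowerSeries

/-- The `i`-th letter (1-based value in `{1,…,k}`) of a word `w ∈ [k]^n`,
with value `0` outside the word. -/
def letter {n k : ℕ} (w : Fin n → Fin k) (i : ℕ) : ℕ :=
  if h : i < n then (w ⟨i, h⟩ : ℕ) + 1 else 0

/-- `w` avoids the pattern 111: no three equal consecutive letters. -/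
def Avoids111 {n k : ℕ} (w : Fin n → Fin k) : Prop :=
  ∀ i : ℕ, i + 2 < n →
    ¬ (letter w i = letter w (i + 1) ∧ letter w (i + 1) = letter w (i + 2))

/-- The number of words in `[k]^n` avoiding 111. -/
noncomputable def f (n k : ℕ) : ℕ := Nat.card {w : Fin n → Fin k // Avoids111 w}

/-!
Split a 111-avoiding word of length `n + 3` according to whether its first two letters agree.
If they differ, the word is a letter other than the first one of an avoiding word of length
`n + 2`.  If they agree, dropping the first letter leaves an avoiding word of length `n + 2` whose
first two letters differ, i.e. again a new letter in front of an avoiding word of length `n + 1`.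
Hence `f (n + 3) = (k - 1) (f (n + 2) + f (n + 1))`; together with `f n = k ^ n` for `n ≤ 2`
this recurrence is exactly the claimed power series identity.
-/

theorem PowerSeries.mk_mul_eq_of_linear_recurrence {R : Type*} [CommRing R] (a : ℕ → R)
    (c d : R) (h : ∀ n, a (n + 3) = c * a (n + 2) + d * a (n + 1)) :
    mk a * (1 - C c * X - C d * X ^ 2) =
      C (a 0) + C (a 1 - c * a 0) * X + C (a 2 - c * a 1 - d * a 0) * X ^ 2 := by
  ext (_ | _ | _ | n) <;>
    simp [mul_sub, ← mul_assoc, coeff_mul_X_pow', coeff_succ_mul_X, h]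
  all_goals ring

-- Over `ℚ`, so that `Nat.card β - 1` is not truncated.
theorem Nat.card_sigma_ne {α β : Type*} [Finite α] [Finite β] (g : α → β) :
    (Nat.card (Σ x : α, {b : β // b ≠ g x}) : ℚ) = Nat.card α * (Nat.card β - 1) := by
  classical
  have := Fintype.ofFinite α
  have := Fintype.ofFinite β
  have card_ne (b : β) : (Nat.card {b' // b' ≠ b} : ℚ) = Nat.card β - 1 := by
    have : Nonempty β := ⟨b⟩
    rw [Nat.card_eq_fintype_card, Fintype.card_subtype_compl, Fintype.card_subtype_eq,
      Nat.cast_sub Fintype.card_pos, Nat.card_eq_fintype_card, Nat.cast_one]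
  rw [Nat.card_sigma, Nat.cast_sum]
  simp only [card_ne]
  rw [Finset.sum_const, Finset.card_univ, nsmul_eq_mul, Nat.card_eq_fintype_card (α := α)]

theorem Nat.card_subtype_eq_card_and_add_card_and_not {α : Type*} [Finite α] (p q : α → Prop) :
    Nat.card {x // p x} = Nat.card {x // p x ∧ q x} + Nat.card {x // p x ∧ ¬q x} := by
  classical
  rw [← Nat.card_congr (Equiv.subtypeSubtypeEquivSubtypeInter p q),
    ← Nat.card_congr (Equiv.subtypeSubtypeEquivSubtypeInter p (¬q ·)), ← Nat.card_sum]
  exact Nat.card_congr (Equiv.sumCompl _).symm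

section Words

variable {n k : ℕ}

lemma letter_of_lt (w : Fin n → Fin k) {i : ℕ} (h : i < n) : letter w i = w ⟨i, h⟩ + 1 := by
  simp [letter, h]

@[simp]
lemma letter_cons_zero (a : Fin k) (u : Fin n → Fin k) :
    letter (Fin.cons a u : Fin (n + 1) → Fin k) 0 = a + 1 := by
  simp [letter]

@[simp]
lemma letter_cons_succ (a : Fin k) (u : Fin n → Fin k) (i : ℕ) :
    letter (Fin.cons a u : Fin (n + 1) → Fin k) (i + 1) = letter u i := by
  by_cases h : i < n
  · rw [letter, dif_pos (Nat.succ_lt_succ h), ← Fin.succ_mk, Fin.cons_succ, letter_of_lt u h]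
  · simp [letter, h]

lemma avoids111_cons_iff (a : Fin k) (u : Fin n → Fin k) :
    Avoids111 (Fin.cons a u : Fin (n + 1) → Fin k) ↔
      (2 ≤ n → ¬(a + 1 = letter u 0 ∧ letter u 0 = letter u 1)) ∧ Avoids111 u := by
  constructor
  · intro h
    exact ⟨fun hn => by simpa using h 0 (by omega),
      fun i hi => by simpa using h (i + 1) (by omega)⟩
  · rintro ⟨hhead, htail⟩ (_ | i) hi
    · simpa using hhead (by omega)
    · simpa using htail i (by omega)

lemma avoids111_cons_iff_of_ne {a : Fin k} {u : Fin (n + 1) → Fin k} (ha : a ≠ u 0) :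
    Avoids111 (Fin.cons a u : Fin (n + 2) → Fin k) ↔ Avoids111 u := by
  rw [avoids111_cons_iff, letter_of_lt u (Nat.succ_pos n)]
  simp [Fin.val_inj, ha]

lemma avoids111_cons_self_iff (u : Fin (n + 2) → Fin k) :
    Avoids111 (Fin.cons (u 0) u : Fin (n + 3) → Fin k) ↔ Avoids111 u ∧ u 0 ≠ u 1 := by
  rw [avoids111_cons_iff, letter_of_lt u (by omega : 0 < n + 2),
    letter_of_lt u (by omega : 1 < n + 2)]
  simp [Fin.val_inj, and_comm]

lemma Avoids111.tail {w : Fin (n + 1) → Fin k} (h : Avoids111 w) : Avoids111 (Fin.tail w) := by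
  rw [← Fin.cons_self_tail w, avoids111_cons_iff] at h
  exact h.2

lemma cons_tail_zero_tail {α : Type*} {w : Fin (n + 2) → α} (h : w 0 = w 1) :
    Fin.cons (Fin.tail w 0) (Fin.tail w) = w := by
  have : Fin.tail w 0 = w 0 := h.symm
  rw [this, Fin.cons_self_tail]

def consNeEquiv (n k : ℕ) :
    {w : Fin (n + 2) → Fin k // Avoids111 w ∧ w 0 ≠ w 1} ≃
      Σ u : {u : Fin (n + 1) → Fin k // Avoids111 u}, {a : Fin k // a ≠ u.1 0} where
  toFun w := ⟨⟨Fin.tail w.1, w.2.1.tail⟩, ⟨w.1 0, w.2.2⟩⟩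
  invFun p := ⟨Fin.cons p.2.1 p.1.1, (avoids111_cons_iff_of_ne p.2.2).2 p.1.2, p.2.2⟩
  left_inv w := Subtype.ext (Fin.cons_self_tail w.1)
  right_inv _ := rfl

def consSelfEquiv (n k : ℕ) :
    {w : Fin (n + 3) → Fin k // Avoids111 w ∧ w 0 = w 1} ≃
      {u : Fin (n + 2) → Fin k // Avoids111 u ∧ u 0 ≠ u 1} where
  toFun w := ⟨Fin.tail w.1, by
    rw [← avoids111_cons_self_iff, cons_tail_zero_tail w.2.2]
    exact w.2.1⟩
  invFun u := ⟨Fin.cons (u.1 0) u.1, (avoids111_cons_self_iff u.1).2 u.2, rfl⟩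
  left_inv w := Subtype.ext (cons_tail_zero_tail w.2.2)
  right_inv _ := rfl

lemma f_add_three (n k : ℕ) :
    (f (n + 3) k : ℚ) = (k - 1) * f (n + 2) k + (k - 1) * f (n + 1) k := by
  rw [f, Nat.card_subtype_eq_card_and_add_card_and_not _ fun w => w 0 = w 1,
    Nat.card_congr ((consSelfEquiv n k).trans (consNeEquiv n k)),
    Nat.card_congr (consNeEquiv (n + 1) k), Nat.cast_add, Nat.card_sigma_ne, Nat.card_sigma_ne]
  simp only [f, Nat.card_fin]
  ring

lemma f_of_le_two {n : ℕ} (hn : n ≤ 2) (k : ℕ) : f n k = k ^ n := by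
  have avoids (w : Fin n → Fin k) : Avoids111 w := fun i hi => absurd hi (by omega)
  rw [f, Nat.card_congr (Equiv.subtypeUnivEquiv avoids), Nat.card_fun, Nat.card_fin,
    Nat.card_fin]

end Words

theorem stmt13_general (k : ℕ) :
    (PowerSeries.mk fun n => (f n k : ℚ)) *
        (1 - C ((k : ℚ) - 1) * X - C ((k : ℚ) - 1) * X ^ 2) =
      1 + X + X ^ 2 := by
  rw [mk_mul_eq_of_linear_recurrence _ _ _ (f_add_three · k)]
  have coeff_one : ((k ^ 1 : ℕ) : ℚ) - (k - 1) * (k ^ 0 : ℕ) = 1 := by push_cast; ring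
  have coeff_two : ((k ^ 2 : ℕ) : ℚ) - (k - 1) * (k ^ 1 : ℕ) - (k - 1) * (k ^ 0 : ℕ) = 1 := by
    push_cast; ring
  rw [f_of_le_two (by norm_num : 0 ≤ 2), f_of_le_two (by norm_num : 1 ≤ 2), f_of_le_two le_rfl,
    coeff_one, coeff_two, pow_zero, Nat.cast_one, map_one, one_mul, one_mul]

theorem stmt13 (k : ℕ) (hk : 1 ≤ k) :
    (PowerSeries.mk fun n => (f n k : ℚ)) *
        (1 - C ((k : ℚ) - 1) * X - C ((k : ℚ) - 1) * X ^ 2) =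
      1 + X + X ^ 2 :=
  stmt13_general k
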